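/- Continuation substitution principle for computations: if Δ, x : A₁, y : A₂; Γ ⊢ c′ ÷ A₃ and Δ; Γ, k ∼: A₁ @ A₂ ⇒ A₃ ⊢ c ÷ B, then Δ; Γ ⊢ ⟨⟨(x, y). c′ / k⟩⟩ c ÷ B. -/
import Mathlib


/-!
ECMTT (Effectful Contextual Modal Type Theory), Zyuzin & Nanevski.

De Bruijn representation with two separate variable namespaces:
* Δ-indices for value variables `x : A` and modal variables `u :: A[Ψ]`
  (both live in the modal context Δ; index 0 is the most recently bound).
* Γ-indices for operations `op ÷ A ⇒ B` and continuations `k ∼: A @ S ⇒ B`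
  (both live in the effect context Γ; index 0 is the most recently bound).
An algebraic theory Ψ is a list of operation signatures (input, output).
-/

inductive Ty : Type where
  | base : ℕ → Ty
  | unit : Ty
  | arrow : Ty → Ty → Ty
  | box : List (Ty × Ty) → Ty → Ty

/-- Algebraic theory: list of operation signatures `A ⇒ B`. -/
abbrev Theory := List (Ty × Ty)

/-- Modal-context hypotheses: value variables and modal variables. -/
inductive DHyp : Type where
  | val : Ty → DHyp
  | modal : Ty → Theory → DHyp

/-- Effect-context hypotheses: operations and continuations. -/
inductive GHyp : Type where
  | op : Ty → Ty → GHyp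
  | cont : Ty → Ty → Ty → GHyp   -- `k ∼: A @ S ⇒ B`

abbrev DCtx := List DHyp
abbrev GCtx := List GHyp

/-- An algebraic theory viewed as an effect context (operations only). -/
def thCtx (Ψ : Theory) : GCtx := Ψ.map fun p => GHyp.op p.1 p.2

mutual
  /-- Expressions. -/
  inductive Expr : Type where
    | var : ℕ → Expr                      -- value variable (Δ-index)
    | unit : Expr                         -- the value () of the unit type
    | lam : Ty → Expr → Expr              -- λx:A. e  (binds a Δ value var)
    | app : Expr → Expr → Expr
    | box : Theory → Comp → Expr          -- box Ψ. c (resets Γ to Ψ)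
    | letbox : Expr → Expr → Expr         -- let box u = e₁ in e₂ (binds a Δ modal var)
  /-- Computations. -/
  inductive Comp : Type where
    | ret : Expr → Comp
    | bind : Stmt → Comp → Comp           -- x ← s; c (binds a Δ value var)
    | letbox : Expr → Comp → Comp         -- let box u = e in c (binds a Δ modal var)
  /-- Statements. -/
  inductive Stmt : Type where
    | op : ℕ → Expr → Stmt                -- op e (Γ-index)
    | cont : ℕ → Expr → Expr → Stmt       -- k(e₁, e₂) (Γ-index)
    | handle : ℕ → HSeq → Handler → Expr → Stmt  -- u with [Θ] h @ e (Δ-index for u)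
  /-- Handlers. -/
  inductive Handler : Type where
    | retc : Comp → Handler               -- (return x @ z ↦ c): c binds x (idx1), z (idx0)
    | opc : Handler → Comp → Handler      -- h, (op(x,k) @ z ↦ c): c binds x(Δ1), z(Δ0), k(Γ0)
  /-- Handling sequences. -/
  inductive HSeq : Type where
    | nil : HSeq
    | cons : HSeq → Handler → Expr → Comp → HSeq  -- Θ, (h @ e to x. c): c binds x (Δ0)
end

/-- Lift a renaming under one binder. -/
def liftR (ρ : ℕ → ℕ) : ℕ → ℕ
  | 0 => 0
  | n + 1 => ρ n + 1

mutual
  /-- Renaming of Δ-indices. -/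
  def renDE (ρ : ℕ → ℕ) : Expr → Expr
    | .var n => .var (ρ n)
    | .unit => .unit
    | .lam A e => .lam A (renDE (liftR ρ) e)
    | .app e1 e2 => .app (renDE ρ e1) (renDE ρ e2)
    | .box Ψ c => .box Ψ (renDC ρ c)
    | .letbox e1 e2 => .letbox (renDE ρ e1) (renDE (liftR ρ) e2)
  def renDC (ρ : ℕ → ℕ) : Comp → Comp
    | .ret e => .ret (renDE ρ e)
    | .bind s c => .bind (renDS ρ s) (renDC (liftR ρ) c)
    | .letbox e c => .letbox (renDE ρ e) (renDC (liftR ρ) c)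
  def renDS (ρ : ℕ → ℕ) : Stmt → Stmt
    | .op i e => .op i (renDE ρ e)
    | .cont k e1 e2 => .cont k (renDE ρ e1) (renDE ρ e2)
    | .handle u Θ h e => .handle (ρ u) (renDT ρ Θ) (renDH ρ h) (renDE ρ e)
  def renDH (ρ : ℕ → ℕ) : Handler → Handler
    | .retc c => .retc (renDC (liftR (liftR ρ)) c)
    | .opc h c => .opc (renDH ρ h) (renDC (liftR (liftR ρ)) c)
  def renDT (ρ : ℕ → ℕ) : HSeq → HSeq
    | .nil => .nil
    | .cons Θ h e c => .cons (renDT ρ Θ) (renDH ρ h) (renDE ρ e) (renDC (liftR ρ) c)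
end

mutual
  /-- Renaming of Γ-indices (expressions contain no free Γ-variables). -/
  def renGC (ρ : ℕ → ℕ) : Comp → Comp
    | .ret e => .ret e
    | .bind s c => .bind (renGS ρ s) (renGC ρ c)
    | .letbox e c => .letbox e (renGC ρ c)
  def renGS (ρ : ℕ → ℕ) : Stmt → Stmt
    | .op i e => .op (ρ i) e
    | .cont k e1 e2 => .cont (ρ k) e1 e2
    | .handle u Θ h e => .handle u Θ (renGH ρ h) e
  def renGH (ρ : ℕ → ℕ) : Handler → Handler
    | .retc c => .retc (renGC ρ c)
    | .opc h c => .opc (renGH ρ h) (renGC (liftR ρ) c)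
end

/-- Index adjustment for removing the Δ-variable at depth `d`. -/
def sIdx (d m : ℕ) : ℕ := if m < d then m else m - 1

/-- Variable case of expression substitution at depth `d`. -/
def sVar (e : Expr) (d m : ℕ) : Expr :=
  if m < d then .var m else if m = d then renDE (· + d) e else .var (m - 1)

mutual
  /-- Expression substitution `[e/x]·`: substitute `e` for the Δ value variable at depth `d`. -/
  def esbE (e : Expr) : ℕ → Expr → Expr
    | d, .var m => sVar e d m
    | _, .unit => .unit
    | d, .lam A e' => .lam A (esbE e (d+1) e')
    | d, .app e1 e2 => .app (esbE e d e1) (esbE e d e2)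
    | d, .box Ψ c => .box Ψ (esbC e d c)
    | d, .letbox e1 e2 => .letbox (esbE e d e1) (esbE e (d+1) e2)
  def esbC (e : Expr) : ℕ → Comp → Comp
    | d, .ret e' => .ret (esbE e d e')
    | d, .bind s c => .bind (esbS e d s) (esbC e (d+1) c)
    | d, .letbox e' c => .letbox (esbE e d e') (esbC e (d+1) c)
  def esbS (e : Expr) : ℕ → Stmt → Stmt
    | d, .op i e' => .op i (esbE e d e')
    | d, .cont k e1 e2 => .cont k (esbE e d e1) (esbE e d e2)
    | d, .handle u Θ h e' => .handle (sIdx d u) (esbT e d Θ) (esbH e d h) (esbE e d e')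
  def esbH (e : Expr) : ℕ → Handler → Handler
    | d, .retc c => .retc (esbC e (d+2) c)
    | d, .opc h c => .opc (esbH e d h) (esbC e (d+2) c)
  def esbT (e : Expr) : ℕ → HSeq → HSeq
    | _, .nil => .nil
    | d, .cons Θ h e' c => .cons (esbT e d Θ) (esbH e d h) (esbE e d e') (esbC e (d+1) c)
end

/-- Monadic substitution `⟨c/x⟩c′` (Figure 5a): sequentially compose `c` before `c′` via `x`. -/
def monSub : Comp → Comp → Comp
  | .ret e, c' => esbC e 0 c'
  | .bind s c, c' => .bind s (monSub c (renDC (liftR Nat.succ) c'))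
  | .letbox e c, c' => .letbox e (monSub c (renDC (liftR Nat.succ) c'))

/-- Index adjustment for removing the Γ-variable at position `g`. -/
def adjG (g m : ℕ) : ℕ := if m < g then m else m - 1

mutual
  /-- Continuation substitution `⟨⟨(x,y). body / k⟩⟩ ·` (Figure 5b).
  `body` is typed in `Δ, x, y; Γ` (so `y` is Δ-index 0 and `x` is Δ-index 1);
  `g` is the current Γ-index of `k`; `dsh`/`gsh` record the crossed Δ and Γ binders. -/
  def ksubC (body : Comp) : ℕ → ℕ → ℕ → Comp → Comp
    | _, _, _, .ret e => .ret e
    | g, dsh, gsh, .bind (.cont k e1 e2) c' =>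
        if k = g then
          monSub
            (esbC e2 0 (esbC e1 1
              (renDC (liftR (liftR (· + dsh))) (renGC (· + gsh) body))))
            (ksubC body g (dsh+1) gsh c')
        else
          .bind (.cont (adjG g k) e1 e2) (ksubC body g (dsh+1) gsh c')
    | g, dsh, gsh, .bind (.op i e) c' =>
        .bind (.op (adjG g i) e) (ksubC body g (dsh+1) gsh c')
    | g, dsh, gsh, .bind (.handle u Θ h e) c' =>
        .bind (.handle u Θ (ksubH body g dsh gsh h) e) (ksubC body g (dsh+1) gsh c')
    | g, dsh, gsh, .letbox e c' => .letbox e (ksubC body g (dsh+1) gsh c')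
  def ksubH (body : Comp) : ℕ → ℕ → ℕ → Handler → Handler
    | g, dsh, gsh, .retc c => .retc (ksubC body g (dsh+2) gsh c)
    | g, dsh, gsh, .opc h c =>
        .opc (ksubH body g dsh gsh h) (ksubC body (g+1) (dsh+2) (gsh+1) c)
end

/-- The return clause of a handler. -/
def hret : Handler → Comp
  | .retc c => c
  | .opc h _ => hret h

/-- The clause of a handler for the operation with Γ-index `i` (0 = last-added operation). -/
def hop : Handler → ℕ → Comp
  | .retc c, _ => c
  | .opc _ c, 0 => c
  | .opc h _, i + 1 => hop h i

/-- Handling `⦃·⦄ h @ e` (Figure 5c), carrying a pending Δ-renaming `ρ` of the handled term. -/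
def hndl : Comp → (ℕ → ℕ) → Handler → Expr → Comp
  | .ret e', ρ, h, _e =>
      -- [ρ e′ / x] [e / z] (return clause)
      esbC (renDE ρ e') 0 (esbC _e 0 (hret h))
  | .bind (.op i e') c', ρ, h, e =>
      -- ⟨⟨(y, z′). ⦃c′⦄ h @ z′ / k⟩⟩ ([ρ e′ / x′] [e / z] c_op)
      ksubC (hndl c' (fun n => liftR ρ n + 1) (renDH (· + 2) h) (.var 0)) 0 0 0
        (esbC (renDE ρ e') 0 (esbC e 0 (hop h i)))
  | .bind (.cont k e1 e2) c', ρ, h, e =>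
      -- unreachable on well-typed input (the handled term lives in a theory, no continuations)
      .bind (renDS ρ (.cont k e1 e2)) (hndl c' (liftR ρ) (renDH (· + 1) h) (renDE (· + 1) e))
  | .bind (.handle u Θ h' e') c', ρ, h, e =>
      .bind (.handle (ρ u)
          (.cons (renDT ρ Θ) (renDH ρ h') (renDE ρ e') (renDC (liftR ρ) c')) h e)
        (.ret (.var 0))
  | .letbox e' c', ρ, h, e =>
      .letbox (renDE ρ e') (hndl c' (liftR ρ) (renDH (· + 1) h) (renDE (· + 1) e))

/-- Handling sequencing `⦃·⦄ Θ` (Figure 5d). -/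
def hndlSeq : Comp → HSeq → Comp
  | c, .nil => c
  | c, .cons Θ h e c' => monSub (hndl (hndlSeq c Θ) id h e) c'

mutual
  /-- Modal substitution `[[Ψ. c / u]] ·` for the modal variable at Δ-depth `d` (Appendix A). -/
  def msubE (c : Comp) : ℕ → Expr → Expr
    | d, .var m => .var (sIdx d m)
    | _, .unit => .unit
    | d, .lam A e => .lam A (msubE c (d+1) e)
    | d, .app e1 e2 => .app (msubE c d e1) (msubE c d e2)
    | d, .box Ψ c' => .box Ψ (msubC c d c')
    | d, .letbox e1 e2 => .letbox (msubE c d e1) (msubE c (d+1) e2)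
  def msubC (c : Comp) : ℕ → Comp → Comp
    | d, .ret e => .ret (msubE c d e)
    | d, .bind (.handle u Θ h e) c' =>
        if u = d then
          -- guarded occurrence of u: ⟨ ⦃⦃c⦄Θ'⦄ h' @ e' / x′ ⟩ c″
          monSub
            (hndl (hndlSeq (renDC (· + d) c) (msubT c d Θ)) id (msubH c d h) (msubE c d e))
            (msubC c (d+1) c')
        else
          .bind (.handle (sIdx d u) (msubT c d Θ) (msubH c d h) (msubE c d e))
            (msubC c (d+1) c')
    | d, .bind (.op i e) c' => .bind (.op i (msubE c d e)) (msubC c (d+1) c')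
    | d, .bind (.cont k e1 e2) c' =>
        .bind (.cont k (msubE c d e1) (msubE c d e2)) (msubC c (d+1) c')
    | d, .letbox e c' => .letbox (msubE c d e) (msubC c (d+1) c')
  def msubS (c : Comp) : ℕ → Stmt → Stmt
    | d, .op i e => .op i (msubE c d e)
    | d, .cont k e1 e2 => .cont k (msubE c d e1) (msubE c d e2)
    | d, .handle u Θ h e => .handle (sIdx d u) (msubT c d Θ) (msubH c d h) (msubE c d e)
  def msubH (c : Comp) : ℕ → Handler → Handler
    | d, .retc c' => .retc (msubC c (d+2) c')
    | d, .opc h c' => .opc (msubH c d h) (msubC c (d+2) c')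
  def msubT (c : Comp) : ℕ → HSeq → HSeq
    | _, .nil => .nil
    | d, .cons Θ h e c' => .cons (msubT c d Θ) (msubH c d h) (msubE c d e) (msubC c (d+1) c')
end

/-- Clause of the identity handler for the operation with Γ-index `n` (relative to the full
theory): `opₙ(x, k) @ z ↦ y ← opₙ x; k(y, z)`. Inside the clause body the effect context is
extended by `k`, so the operation index becomes `n + 1`. -/
def idClause (n : ℕ) : Comp :=
  .bind (.op (n+1) (.var 1)) (.bind (.cont 0 (.var 0) (.var 1)) (.ret (.var 0)))

def idHandlerAux : ℕ → Theory → Handler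
  | _, [] => .retc (.ret (.var 1))     -- return x @ z ↦ ret x
  | n, _ :: Ψ => .opc (idHandlerAux (n+1) Ψ) (idClause n)

/-- The identity handler `id_Ψ` for a theory `Ψ`. -/
def idHandler (Ψ : Theory) : Handler := idHandlerAux 0 Ψ

mutual
  /-- Expression typing `Δ ⊢ e : A`. -/
  inductive ETy : DCtx → Expr → Ty → Prop where
    | var : Δ[x]? = some (.val A) → ETy Δ (.var x) A
    | unit : ETy Δ .unit .unit
    | lam : ETy (.val A :: Δ) e B → ETy Δ (.lam A e) (.arrow A B)
    | app : ETy Δ e1 (.arrow A B) → ETy Δ e2 A → ETy Δ (.app e1 e2) B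
    | box : CTy Δ (thCtx Ψ) c A → ETy Δ (.box Ψ c) (.box Ψ A)
    | letbox : ETy Δ e1 (.box Ψ A) → ETy (.modal A Ψ :: Δ) e2 B →
        ETy Δ (.letbox e1 e2) B
  /-- Computation typing `Δ; Γ ⊢ c ÷ A`. -/
  inductive CTy : DCtx → GCtx → Comp → Ty → Prop where
    | ret : ETy Δ e A → CTy Δ Γ (.ret e) A
    | bind : STy Δ Γ s A → CTy (.val A :: Δ) Γ c B → CTy Δ Γ (.bind s c) B
    | letbox : ETy Δ e (.box Ψ A) → CTy (.modal A Ψ :: Δ) Γ c B →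
        CTy Δ Γ (.letbox e c) B
  /-- Statement typing `Δ; Γ ⊢ s ÷ₛ A`. -/
  inductive STy : DCtx → GCtx → Stmt → Ty → Prop where
    | op : Γ[i]? = some (.op A B) → ETy Δ e A → STy Δ Γ (.op i e) B
    | cont : Γ[k]? = some (.cont A S B) → ETy Δ e1 A → ETy Δ e2 S →
        STy Δ Γ (.cont k e1 e2) B
    | mvar : Δ[u]? = some (.modal A Ψ) → TTy Δ Ψ' Θ A Ψ B →
        HTy Δ Γ h B Ψ' S C → ETy Δ e S → STy Δ Γ (.handle u Θ h e) C
  /-- Handler typing `Δ; Γ ⊢ h ÷ A[Ψ] ⇒@S B`. -/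
  inductive HTy : DCtx → GCtx → Handler → Ty → Theory → Ty → Ty → Prop where
    | retc : CTy (.val S :: .val A :: Δ) Γ c B → HTy Δ Γ (.retc c) A [] S B
    | opc : HTy Δ Γ h C Ψ S C' →
        CTy (.val S :: .val A :: Δ) (.cont B S C' :: Γ) c C' →
        HTy Δ Γ (.opc h c) C ((A, B) :: Ψ) S C'
  /-- Handling-sequence typing `Δ; Ψ ⊢ Θ ÷ A[Ψ'] ⇒ B`. -/
  inductive TTy : DCtx → Theory → HSeq → Ty → Theory → Ty → Prop where
    | nil : Ψ' <+: Ψ → TTy Δ Ψ .nil A Ψ' A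
    | cons : TTy Δ Ψ' Θ A Ψ'' B → HTy Δ (thCtx Ψ) h B Ψ' S C → ETy Δ e S →
        CTy (.val C :: Δ) (thCtx Ψ) c D → TTy Δ Ψ (.cons Θ h e c) A Ψ'' D
end

/-- Expression values: λ-abstractions, boxes, and base values such as (). -/
inductive EVal : Expr → Prop where
  | unit : EVal .unit
  | lam : EVal (.lam A e)
  | box : EVal (.box Ψ c)

/-- Call-by-value small-step reduction on expressions (Figure 6). -/
inductive EStep : Expr → Expr → Prop where
  | app1 : EStep e1 e1' → EStep (.app e1 e2) (.app e1' e2)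
  | app2 : EVal v → EStep e2 e2' → EStep (.app v e2) (.app v e2')
  | beta : EVal v → EStep (.app (.lam A e) v) (esbE v 0 e)
  | letbox1 : EStep e1 e1' → EStep (.letbox e1 e2) (.letbox e1' e2)
  | letbox : EStep (.letbox (.box Ψ c) e2) (msubE c 0 e2)

/-- Call-by-value small-step reduction on computations (Figure 6). -/
inductive CStep : Comp → Comp → Prop where
  | ret : EStep e e' → CStep (.ret e) (.ret e')
  | letbox1 : EStep e e' → CStep (.letbox e c) (.letbox e' c)
  | letbox : CStep (.letbox (.box Ψ c1) c2) (msubC c1 0 c2)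

/-! ### Auxiliary lemmas for the continuation substitution principle -/

/-- Agreement of a renaming with two contexts. -/
def Good {α : Type} (ρ : ℕ → ℕ) (l l' : List α) : Prop :=
  ∀ n h, l[n]? = some h → l'[ρ n]? = some h

theorem Good.lift {α : Type} {ρ : ℕ → ℕ} {l l' : List α} (hg : Good ρ l l') (a : α) :
    Good (liftR ρ) (a :: l) (a :: l') := by
  intro n h hn
  cases n with
  | zero => simpa [liftR] using hn
  | succ n => simp only [List.getElem?_cons_succ] at hn; simpa [liftR] using hg n h hn

theorem lookup_weak {α : Type} (D : List α) {Δ : List α} {n : ℕ} {b : α}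
    (h : Δ[n]? = some b) : (D ++ Δ)[n + D.length]? = some b := by
  rw [List.getElem?_append_right (by omega)]
  simpa using h

theorem Good.weak {α : Type} (D Δ : List α) : Good (· + D.length) Δ (D ++ Δ) :=
  fun _ _ h => lookup_weak D h

theorem Good.succ {α : Type} (a : α) (Δ : List α) : Good Nat.succ Δ (a :: Δ) := by
  intro n h hn; simpa using hn

theorem lookup_insert {α : Type} (D Δ : List α) (a : α) :
    (D ++ a :: Δ)[D.length]? = some a := by
  rw [List.getElem?_append_right (le_refl _)]; simp

theorem lookup_lt {α : Type} {D Δ : List α} (Δ' : List α) {k : ℕ} (hk : k < D.length)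
    {b : α} (h : (D ++ Δ)[k]? = some b) : (D ++ Δ')[k]? = some b := by
  rw [List.getElem?_append_left hk] at h ⊢; exact h

theorem lookup_remove {α : Type} {D Δ : List α} {a b : α} {k : ℕ} (hk : k ≠ D.length)
    (h : (D ++ a :: Δ)[k]? = some b) :
    (D ++ Δ)[if k < D.length then k else k - 1]? = some b := by
  split
  · exact lookup_lt Δ ‹_› h
  · have hgt : D.length < k := by omega
    rw [List.getElem?_append_right (by omega)] at h ⊢
    rw [show k - D.length = (k - D.length - 1) + 1 by omega] at h
    simp only [List.getElem?_cons_succ] at h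
    rw [show k - 1 - D.length = k - D.length - 1 by omega]
    exact h

/-! ### Δ-renaming preserves typing -/

mutual
theorem renDE_ty (e : Expr) : ∀ {Δ Δ' : DCtx} {ρ : ℕ → ℕ} {A : Ty},
    Good ρ Δ Δ' → ETy Δ e A → ETy Δ' (renDE ρ e) A := by
  cases e with
  | var n =>
      intro Δ Δ' ρ A hg ht
      cases ht with | var h => exact ETy.var (hg _ _ h)
  | unit =>
      intro Δ Δ' ρ A hg ht
      cases ht; exact ETy.unit
  | lam A e =>
      intro Δ Δ' ρ B hg ht
      cases ht with | lam h =>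
        exact ETy.lam (renDE_ty e (hg.lift _) h)
  | app e1 e2 =>
      intro Δ Δ' ρ A hg ht
      cases ht with | app h1 h2 =>
        exact ETy.app (renDE_ty e1 hg h1) (renDE_ty e2 hg h2)
  | box Ψ c =>
      intro Δ Δ' ρ A hg ht
      cases ht with | box h => exact ETy.box (renDC_ty c hg h)
  | letbox e1 e2 =>
      intro Δ Δ' ρ A hg ht
      cases ht with | letbox h1 h2 =>
        exact ETy.letbox (renDE_ty e1 hg h1) (renDE_ty e2 (hg.lift _) h2)

theorem renDC_ty (c : Comp) : ∀ {Δ Δ' : DCtx} {Γ : GCtx} {ρ : ℕ → ℕ} {A : Ty},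
    Good ρ Δ Δ' → CTy Δ Γ c A → CTy Δ' Γ (renDC ρ c) A := by
  cases c with
  | ret e =>
      intro Δ Δ' Γ ρ A hg ht
      cases ht with | ret h => exact CTy.ret (renDE_ty e hg h)
  | bind s c =>
      intro Δ Δ' Γ ρ A hg ht
      cases ht with | bind hs hc =>
        exact CTy.bind (renDS_ty s hg hs) (renDC_ty c (hg.lift _) hc)
  | letbox e c =>
      intro Δ Δ' Γ ρ A hg ht
      cases ht with | letbox he hc =>
        exact CTy.letbox (renDE_ty e hg he) (renDC_ty c (hg.lift _) hc)

theorem renDS_ty (s : Stmt) : ∀ {Δ Δ' : DCtx} {Γ : GCtx} {ρ : ℕ → ℕ} {A : Ty},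
    Good ρ Δ Δ' → STy Δ Γ s A → STy Δ' Γ (renDS ρ s) A := by
  cases s with
  | op i e =>
      intro Δ Δ' Γ ρ A hg ht
      cases ht with | op h he => exact STy.op h (renDE_ty e hg he)
  | cont k e1 e2 =>
      intro Δ Δ' Γ ρ A hg ht
      cases ht with | cont h h1 h2 =>
        exact STy.cont h (renDE_ty e1 hg h1) (renDE_ty e2 hg h2)
  | handle u Θ h e =>
      intro Δ Δ' Γ ρ A hg ht
      cases ht with | mvar hu hΘ hh he =>
        exact STy.mvar (hg _ _ hu) (renDT_ty Θ hg hΘ) (renDH_ty h hg hh) (renDE_ty e hg he)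

theorem renDH_ty (h : Handler) : ∀ {Δ Δ' : DCtx} {Γ : GCtx} {ρ : ℕ → ℕ} {A : Ty}
    {Ψ : Theory} {S B : Ty},
    Good ρ Δ Δ' → HTy Δ Γ h A Ψ S B → HTy Δ' Γ (renDH ρ h) A Ψ S B := by
  cases h with
  | retc c =>
      intro Δ Δ' Γ ρ A Ψ S B hg ht
      cases ht with | retc hc => exact HTy.retc (renDC_ty c ((hg.lift _).lift _) hc)
  | opc h c =>
      intro Δ Δ' Γ ρ A Ψ S B hg ht
      cases ht with | opc hh hc =>
        exact HTy.opc (renDH_ty h hg hh) (renDC_ty c ((hg.lift _).lift _) hc)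

theorem renDT_ty (Θ : HSeq) : ∀ {Δ Δ' : DCtx} {Ψ : Theory} {ρ : ℕ → ℕ} {A : Ty}
    {Ψ' : Theory} {B : Ty},
    Good ρ Δ Δ' → TTy Δ Ψ Θ A Ψ' B → TTy Δ' Ψ (renDT ρ Θ) A Ψ' B := by
  cases Θ with
  | nil =>
      intro Δ Δ' Ψ ρ A Ψ' B hg ht
      cases ht with | nil hp => exact TTy.nil hp
  | cons Θ h e c =>
      intro Δ Δ' Ψ ρ A Ψ' B hg ht
      cases ht with | cons hΘ hh he hc =>
        exact TTy.cons (renDT_ty Θ hg hΘ) (renDH_ty h hg hh) (renDE_ty e hg he)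
          (renDC_ty c (hg.lift _) hc)
end

/-! ### Γ-renaming preserves typing -/

mutual
theorem renGC_ty (c : Comp) : ∀ {Δ : DCtx} {Γ Γ' : GCtx} {ρ : ℕ → ℕ} {A : Ty},
    Good ρ Γ Γ' → CTy Δ Γ c A → CTy Δ Γ' (renGC ρ c) A := by
  cases c with
  | ret e =>
      intro Δ Γ Γ' ρ A hg ht
      cases ht with | ret h => exact CTy.ret h
  | bind s c =>
      intro Δ Γ Γ' ρ A hg ht
      cases ht with | bind hs hc =>
        exact CTy.bind (renGS_ty s hg hs) (renGC_ty c hg hc)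
  | letbox e c =>
      intro Δ Γ Γ' ρ A hg ht
      cases ht with | letbox he hc =>
        exact CTy.letbox he (renGC_ty c hg hc)

theorem renGS_ty (s : Stmt) : ∀ {Δ : DCtx} {Γ Γ' : GCtx} {ρ : ℕ → ℕ} {A : Ty},
    Good ρ Γ Γ' → STy Δ Γ s A → STy Δ Γ' (renGS ρ s) A := by
  cases s with
  | op i e =>
      intro Δ Γ Γ' ρ A hg ht
      cases ht with | op h he => exact STy.op (hg _ _ h) he
  | cont k e1 e2 =>
      intro Δ Γ Γ' ρ A hg ht
      cases ht with | cont h h1 h2 => exact STy.cont (hg _ _ h) h1 h2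
  | handle u Θ h e =>
      intro Δ Γ Γ' ρ A hg ht
      cases ht with | mvar hu hΘ hh he =>
        exact STy.mvar hu hΘ (renGH_ty h hg hh) he

theorem renGH_ty (h : Handler) : ∀ {Δ : DCtx} {Γ Γ' : GCtx} {ρ : ℕ → ℕ} {A : Ty}
    {Ψ : Theory} {S B : Ty},
    Good ρ Γ Γ' → HTy Δ Γ h A Ψ S B → HTy Δ Γ' (renGH ρ h) A Ψ S B := by
  cases h with
  | retc c =>
      intro Δ Γ Γ' ρ A Ψ S B hg ht
      cases ht with | retc hc => exact HTy.retc (renGC_ty c hg hc)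
  | opc h c =>
      intro Δ Γ Γ' ρ A Ψ S B hg ht
      cases ht with | opc hh hc =>
        exact HTy.opc (renGH_ty h hg hh) (renGC_ty c (hg.lift _) hc)
end

/-! ### Expression substitution preserves typing -/

mutual
theorem esbE_ty (e' : Expr) : ∀ {Δ : DCtx} {e : Expr} {A : Ty} (D : DCtx) {B : Ty},
    ETy Δ e A → ETy (D ++ .val A :: Δ) e' B → ETy (D ++ Δ) (esbE e D.length e') B := by
  cases e' with
  | var m =>
      intro Δ e A D B he ht
      cases ht with | var h =>
        simp only [esbE, sVar]
        split
        · exact ETy.var (lookup_lt Δ ‹_› h)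
        · split
          next heq =>
            subst heq
            rw [lookup_insert] at h
            cases h
            exact renDE_ty e (Good.weak D Δ) he
          next hne =>
            have := lookup_remove hne h
            rw [if_neg ‹_›] at this
            exact ETy.var this
  | unit =>
      intro Δ e A D B he ht
      cases ht; exact ETy.unit
  | lam A0 e1 =>
      intro Δ e A D B he ht
      cases ht with | lam h =>
        exact ETy.lam (esbE_ty e1 (.val A0 :: D) he h)
  | app e1 e2 =>
      intro Δ e A D B he ht
      cases ht with | app h1 h2 =>
        exact ETy.app (esbE_ty e1 D he h1) (esbE_ty e2 D he h2)
  | box Ψ c =>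
      intro Δ e A D B he ht
      cases ht with | box h => exact ETy.box (esbC_ty c D he h)
  | letbox e1 e2 =>
      intro Δ e A D B he ht
      cases ht with | letbox h1 h2 =>
        exact ETy.letbox (esbE_ty e1 D he h1) (esbE_ty e2 (.modal _ _ :: D) he h2)

theorem esbC_ty (c' : Comp) : ∀ {Δ : DCtx} {Γ : GCtx} {e : Expr} {A : Ty} (D : DCtx) {B : Ty},
    ETy Δ e A → CTy (D ++ .val A :: Δ) Γ c' B → CTy (D ++ Δ) Γ (esbC e D.length c') B := by
  cases c' with
  | ret e1 =>
      intro Δ Γ e A D B he ht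
      cases ht with | ret h => exact CTy.ret (esbE_ty e1 D he h)
  | bind s c =>
      intro Δ Γ e A D B he ht
      cases ht with | bind hs hc =>
        exact CTy.bind (esbS_ty s D he hs) (esbC_ty c (.val _ :: D) he hc)
  | letbox e1 c =>
      intro Δ Γ e A D B he ht
      cases ht with | letbox h1 hc =>
        exact CTy.letbox (esbE_ty e1 D he h1) (esbC_ty c (.modal _ _ :: D) he hc)

theorem esbS_ty (s : Stmt) : ∀ {Δ : DCtx} {Γ : GCtx} {e : Expr} {A : Ty} (D : DCtx) {B : Ty},
    ETy Δ e A → STy (D ++ .val A :: Δ) Γ s B → STy (D ++ Δ) Γ (esbS e D.length s) B := by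
  cases s with
  | op i e1 =>
      intro Δ Γ e A D B he ht
      cases ht with | op h h1 => exact STy.op h (esbE_ty e1 D he h1)
  | cont k e1 e2 =>
      intro Δ Γ e A D B he ht
      cases ht with | cont h h1 h2 =>
        exact STy.cont h (esbE_ty e1 D he h1) (esbE_ty e2 D he h2)
  | handle u Θ h e1 =>
      intro Δ Γ e A D B he ht
      cases ht with | mvar hu hΘ hh h1 =>
        have hne : u ≠ D.length := by
          intro huq; subst huq; rw [lookup_insert] at hu; cases hu
        have hu' := lookup_remove hne hu
        exact STy.mvar (by simpa [sIdx] using hu') (esbT_ty Θ D he hΘ)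
          (esbH_ty h D he hh) (esbE_ty e1 D he h1)

theorem esbH_ty (h : Handler) : ∀ {Δ : DCtx} {Γ : GCtx} {e : Expr} {A : Ty} (D : DCtx)
    {C : Ty} {Ψ : Theory} {S B : Ty},
    ETy Δ e A → HTy (D ++ .val A :: Δ) Γ h C Ψ S B →
    HTy (D ++ Δ) Γ (esbH e D.length h) C Ψ S B := by
  cases h with
  | retc c =>
      intro Δ Γ e A D C Ψ S B he ht
      cases ht with | retc hc =>
        exact HTy.retc (esbC_ty c (.val _ :: .val _ :: D) he hc)
  | opc h c =>
      intro Δ Γ e A D C Ψ S B he ht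
      cases ht with | opc hh hc =>
        exact HTy.opc (esbH_ty h D he hh) (esbC_ty c (.val _ :: .val _ :: D) he hc)

theorem esbT_ty (Θ : HSeq) : ∀ {Δ : DCtx} {Ψ : Theory} {e : Expr} {A : Ty} (D : DCtx)
    {C : Ty} {Ψ' : Theory} {B : Ty},
    ETy Δ e A → TTy (D ++ .val A :: Δ) Ψ Θ C Ψ' B →
    TTy (D ++ Δ) Ψ (esbT e D.length Θ) C Ψ' B := by
  cases Θ with
  | nil =>
      intro Δ Ψ e A D C Ψ' B he ht
      cases ht with | nil hp => exact TTy.nil hp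
  | cons Θ h e1 c =>
      intro Δ Ψ e A D C Ψ' B he ht
      cases ht with | cons hΘ hh h1 hc =>
        exact TTy.cons (esbT_ty Θ D he hΘ) (esbH_ty h D he hh) (esbE_ty e1 D he h1)
          (esbC_ty c (.val _ :: D) he hc)
end

/-! ### Monadic substitution preserves typing -/

theorem monSub_ty (c : Comp) : ∀ {Δ : DCtx} {Γ : GCtx} {A : Ty} {c' : Comp} {B : Ty},
    CTy Δ Γ c A → CTy (.val A :: Δ) Γ c' B → CTy Δ Γ (monSub c c') B := by
  cases c with
  | ret e =>
      intro Δ Γ A c' B hc hc'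
      cases hc with | ret he => exact esbC_ty c' [] he hc'
  | bind s c =>
      intro Δ Γ A c' B hc hc'
      cases hc with | bind hs hcc =>
        exact CTy.bind hs (monSub_ty c hcc
          (renDC_ty c' ((Good.succ _ _).lift _) hc'))
  | letbox e c =>
      intro Δ Γ A c' B hc hc'
      cases hc with | letbox he hcc =>
        exact CTy.letbox he (monSub_ty c hcc
          (renDC_ty c' ((Good.succ _ _).lift _) hc'))

/-! ### Continuation substitution preserves typing (generalized) -/

mutual
theorem ksubC_ty (c : Comp) : ∀ {Δ : DCtx} {Γ : GCtx} {body : Comp} {A1 A2 A3 : Ty}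
    (D : DCtx) (G : GCtx) {B : Ty},
    CTy (.val A2 :: .val A1 :: Δ) Γ body A3 →
    CTy (D ++ Δ) (G ++ .cont A1 A2 A3 :: Γ) c B →
    CTy (D ++ Δ) (G ++ Γ) (ksubC body G.length D.length G.length c) B := by
  cases c with
  | ret e =>
      intro Δ Γ body A1 A2 A3 D G B hb ht
      cases ht with | ret he => exact CTy.ret he
  | bind s c' =>
      cases s with
      | op i e =>
          intro Δ Γ body A1 A2 A3 D G B hb ht
          cases ht with | bind hs hc =>
          cases hs with | op h he =>
            simp only [ksubC]
            have hne : i ≠ G.length := by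
              intro hiq; subst hiq; rw [lookup_insert] at h; cases h
            have h' := lookup_remove hne h
            refine CTy.bind (STy.op (by simpa [adjG] using h') he) ?_
            exact ksubC_ty c' (.val _ :: D) G hb hc
      | cont k e1 e2 =>
          intro Δ Γ body A1 A2 A3 D G B hb ht
          cases ht with | bind hs hc =>
          cases hs with | cont h h1 h2 =>
            simp only [ksubC]
            by_cases hk : k = G.length
            · subst hk
              rw [lookup_insert] at h
              cases h
              rw [if_pos rfl]
              have hbody1 : CTy (.val A2 :: .val A1 :: Δ) (G ++ Γ)
                  (renGC (· + G.length) body) A3 :=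
                renGC_ty body (Good.weak G Γ) hb
              have hbody2 : CTy (.val A2 :: .val A1 :: (D ++ Δ)) (G ++ Γ)
                  (renDC (liftR (liftR (· + D.length))) (renGC (· + G.length) body)) A3 :=
                renDC_ty _ (((Good.weak D Δ).lift _).lift _) hbody1
              have hbody3 := esbC_ty _ [DHyp.val A2] h1 hbody2
              have hbody4 := esbC_ty _ [] h2 hbody3
              exact monSub_ty _ hbody4 (ksubC_ty c' (.val A3 :: D) G hb hc)
            · rw [if_neg hk]
              have h' := lookup_remove hk h
              refine CTy.bind (STy.cont (by simpa [adjG] using h') h1 h2) ?_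
              exact ksubC_ty c' (.val _ :: D) G hb hc
      | handle u Θ hh e =>
          intro Δ Γ body A1 A2 A3 D G B hb ht
          cases ht with | bind hs hc =>
          cases hs with | mvar hu hΘ hhh he =>
            simp only [ksubC]
            exact CTy.bind (STy.mvar hu hΘ (ksubH_ty hh D G hb hhh) he)
              (ksubC_ty c' (.val _ :: D) G hb hc)
  | letbox e c' =>
      intro Δ Γ body A1 A2 A3 D G B hb ht
      cases ht with | letbox he hc =>
        simp only [ksubC]
        exact CTy.letbox he (ksubC_ty c' (.modal _ _ :: D) G hb hc)

theorem ksubH_ty (h : Handler) : ∀ {Δ : DCtx} {Γ : GCtx} {body : Comp} {A1 A2 A3 : Ty}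
    (D : DCtx) (G : GCtx) {C : Ty} {Ψ : Theory} {S C' : Ty},
    CTy (.val A2 :: .val A1 :: Δ) Γ body A3 →
    HTy (D ++ Δ) (G ++ .cont A1 A2 A3 :: Γ) h C Ψ S C' →
    HTy (D ++ Δ) (G ++ Γ) (ksubH body G.length D.length G.length h) C Ψ S C' := by
  cases h with
  | retc c =>
      intro Δ Γ body A1 A2 A3 D G C Ψ S C' hb ht
      cases ht with | retc hc =>
        simp only [ksubH]
        exact HTy.retc (ksubC_ty c (.val _ :: .val _ :: D) G hb hc)
  | opc h c =>
      intro Δ Γ body A1 A2 A3 D G C Ψ S C' hb ht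
      cases ht with | opc hh hc =>
        simp only [ksubH]
        exact HTy.opc (ksubH_ty h D G hb hh)
          (ksubC_ty c (.val _ :: .val _ :: D) (.cont _ _ _ :: G) hb hc)
end


/-- Continuation substitution principle for computations, Lemma 4(1):
if `Δ, x : A₁, y : A₂; Γ ⊢ c′ ÷ A₃` and `Δ; Γ, k ∼: A₁ @ A₂ ⇒ A₃ ⊢ c ÷ B`, then
`Δ; Γ ⊢ ⟨⟨(x, y). c′ / k⟩⟩ c ÷ B`. -/
theorem ecmtt_cont_subst_comp :
    ∀ (Δ : DCtx) (Γ : GCtx) (c' c : Comp) (A1 A2 A3 B : Ty),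
      CTy (.val A2 :: .val A1 :: Δ) Γ c' A3 →
      CTy Δ (.cont A1 A2 A3 :: Γ) c B →
      CTy Δ Γ (ksubC c' 0 0 0 c) B := by
  intro Δ Γ c' c A1 A2 A3 B h1 h2
  exact ksubC_ty c [] [] h1 h2
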